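/- arXiv:2512.07490 — 3 statements merged into one kernel-verified Lean document; each statement's English description precedes it below -/
import Mathlib

section
/- Let X⋆ ∈ ℝ^{n1×n2}, and let L ∈ ℝ^{n1×r} and R ∈ ℝ^{n2×r} have full column rank r (so LᵀL and RᵀR are positive definite). Let D1 ∈ ℝ^{n1×r} and D2 ∈ ℝ^{n2×r}. Set E := L Rᵀ − X⋆, ‖D‖_P := ( ‖D1 (RᵀR)^{1/2}‖_F² + ‖D2 (LᵀL)^{1/2}‖_F² )^{1/2}, and σ_min := min( λ_min(LᵀL)^{1/2}, λ_min(RᵀR)^{1/2} ). Then (1/2)‖(L + D1)(R + D2)ᵀ − X⋆‖_F² ≤ (1/2)‖E‖_F² + ⟨E, D1 Rᵀ + L D2ᵀ⟩_F + (C_P/2)‖D‖_P², where C_P := 2 + ‖D‖_P²/(2 σ_min⁴) + √2 ‖E‖_F/σ_min² + 2‖D‖_P/σ_min². -/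
open Matrix

/-- Frobenius inner product of two real matrices. -/
noncomputable def finner {m n : Type*} [Fintype m] [Fintype n]
    (A B : Matrix m n ℝ) : ℝ := (Aᵀ * B).trace

/-- Frobenius norm of a real matrix. -/
noncomputable def fnorm {m n : Type*} [Fintype m] [Fintype n]
    (A : Matrix m n ℝ) : ℝ := Real.sqrt (finner A A)

open scoped Classical in
/-- Square root of a positive semidefinite real matrix (junk value `0` otherwise). -/
noncomputable def psqrt {r : ℕ} (M : Matrix (Fin r) (Fin r) ℝ) : Matrix (Fin r) (Fin r) ℝ :=
  if h : M.PosSemidef then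
    (h.1.eigenvectorUnitary : Matrix (Fin r) (Fin r) ℝ) * diagonal (Real.sqrt ∘ h.1.eigenvalues) *
      (star h.1.eigenvectorUnitary : Matrix (Fin r) (Fin r) ℝ)
  else 0

open scoped Classical in
/-- Smallest eigenvalue of a symmetric real matrix (junk value `0` otherwise). -/
noncomputable def lammin {r : ℕ} (M : Matrix (Fin r) (Fin r) ℝ) : ℝ :=
  if h : M.IsHermitian then ⨅ i, h.eigenvalues i else 0

open scoped Classical in
/-- Largest eigenvalue of a symmetric real matrix (junk value `0` otherwise). -/
noncomputable def lammax {r : ℕ} (M : Matrix (Fin r) (Fin r) ℝ) : ℝ :=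
  if h : M.IsHermitian then ⨆ i, h.eigenvalues i else 0

/-! Write `(L + D1)(R + D2)ᵀ - X⋆ = E + G + H` with `G = D1 Rᵀ + L D2ᵀ` and `H = D1 D2ᵀ`; expanding
the square leaves `⟨E, H⟩ + ½‖G + H‖²` to be absorbed into `C_P/2 ‖D‖_P²`. Because
`(RᵀR)^{1/2}` and `Rᵀ` have the same Gram matrix `RᵀR`, `‖D1 Rᵀ‖_F = ‖D1 (RᵀR)^{1/2}‖_F`, so
`‖G‖_F ≤ √2 ‖D‖_P`. Because `RᵀR - σ_min² I` is positive semidefinite, `σ_min ‖D1‖_F ≤ ‖D1 Rᵀ‖_F`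
(and likewise for `D2`), so `‖H‖_F ≤ ‖D1‖_F ‖D2‖_F ≤ ‖D‖_P² / (2 σ_min²)`. -/

section Frobenius

variable {m n p : Type*} [Fintype m] [Fintype n] [Fintype p]

lemma finner_eq_inner (A B : Matrix m n ℝ) :
    finner A B =
      inner ℝ (WithLp.toLp 2 A.vec : EuclideanSpace ℝ (n × m)) (WithLp.toLp 2 B.vec) := by
  rw [finner, ← vec_dotProduct_vec, EuclideanSpace.inner_eq_star_dotProduct]
  simp [dotProduct_comm]

lemma fnorm_eq_norm (A : Matrix m n ℝ) :
    fnorm A = ‖(WithLp.toLp 2 A.vec : EuclideanSpace ℝ (n × m))‖ := by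
  rw [fnorm, finner_eq_inner, real_inner_self_eq_norm_sq, Real.sqrt_sq (norm_nonneg _)]

attribute [local instance] Matrix.frobeniusNormedAddCommGroup in
lemma fnorm_eq_frobenius_norm (A : Matrix m n ℝ) : fnorm A = ‖A‖ := by
  rw [fnorm_eq_norm, EuclideanSpace.norm_eq, frobenius_norm_def, Real.sqrt_eq_rpow,
    Fintype.sum_prod_type, Finset.sum_comm]
  simp [vec]

lemma fnorm_nonneg (A : Matrix m n ℝ) : 0 ≤ fnorm A := Real.sqrt_nonneg _

lemma fnorm_sq (A : Matrix m n ℝ) : fnorm A ^ 2 = finner A A := by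
  rw [fnorm_eq_norm, finner_eq_inner, real_inner_self_eq_norm_sq]

lemma finner_add_right (A B C : Matrix m n ℝ) : finner A (B + C) = finner A B + finner A C := by
  simp only [finner_eq_inner, vec_add, WithLp.toLp_add, inner_add_right]

lemma finner_le_fnorm_mul_fnorm (A B : Matrix m n ℝ) : finner A B ≤ fnorm A * fnorm B := by
  rw [finner_eq_inner, fnorm_eq_norm, fnorm_eq_norm]
  exact real_inner_le_norm _ _

lemma fnorm_add_sq (A B : Matrix m n ℝ) :
    fnorm (A + B) ^ 2 = fnorm A ^ 2 + 2 * finner A B + fnorm B ^ 2 := by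
  simp only [fnorm_eq_norm, finner_eq_inner, vec_add, WithLp.toLp_add]
  exact norm_add_sq_real _ _

lemma fnorm_add_le (A B : Matrix m n ℝ) : fnorm (A + B) ≤ fnorm A + fnorm B := by
  simp only [fnorm_eq_norm, vec_add, WithLp.toLp_add]
  exact norm_add_le _ _

attribute [local instance] Matrix.frobeniusNormedAddCommGroup in
lemma fnorm_mul_le (A : Matrix m n ℝ) (B : Matrix n p ℝ) : fnorm (A * B) ≤ fnorm A * fnorm B := by
  simp only [fnorm_eq_frobenius_norm]
  exact frobenius_norm_mul A B

attribute [local instance] Matrix.frobeniusNormedAddCommGroup in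
lemma fnorm_transpose (A : Matrix m n ℝ) : fnorm Aᵀ = fnorm A := by
  simp only [fnorm_eq_frobenius_norm, frobenius_norm_transpose]

lemma fnorm_mul_sq (D : Matrix m n ℝ) (S : Matrix n p ℝ) :
    fnorm (D * S) ^ 2 = (D * (S * Sᵀ) * Dᵀ).trace := by
  rw [fnorm_sq, finner, trace_mul_comm, transpose_mul]
  simp only [Matrix.mul_assoc]

lemma fnorm_mul_eq_of_mul_transpose_eq {q : Type*} [Fintype q] {S : Matrix n p ℝ}
    {T : Matrix n q ℝ} (h : S * Sᵀ = T * Tᵀ) (D : Matrix m n ℝ) :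
    fnorm (D * S) = fnorm (D * T) := by
  rw [← sq_eq_sq₀ (fnorm_nonneg _) (fnorm_nonneg _), fnorm_mul_sq, fnorm_mul_sq, h]

lemma mul_fnorm_sq_le_fnorm_mul_sq [DecidableEq n] {S : Matrix n p ℝ} {c : ℝ}
    (h : (S * Sᵀ - c • 1).PosSemidef) (D : Matrix m n ℝ) :
    c * fnorm D ^ 2 ≤ fnorm (D * S) ^ 2 := by
  have hD : fnorm D ^ 2 = (D * Dᵀ).trace := by
    simpa using fnorm_mul_sq D (1 : Matrix n n ℝ)
  have htr := (h.mul_mul_conjTranspose_same D).trace_nonneg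
  rw [conjTranspose_eq_transpose_of_trivial, Matrix.mul_sub, Matrix.sub_mul, trace_sub,
    Matrix.mul_smul, Matrix.smul_mul, trace_smul, Matrix.mul_one, ← fnorm_mul_sq, ← hD] at htr
  simpa [sub_nonneg] using htr

end Frobenius

section Spectral

variable {r : ℕ} {M : Matrix (Fin r) (Fin r) ℝ}

lemma psqrt_eq_cfc (hM : M.PosSemidef) : psqrt M = cfc Real.sqrt M := by
  rw [psqrt, dif_pos hM, hM.1.cfc_eq, IsHermitian.cfc, Unitary.conjStarAlgAut_apply]
  rfl

lemma psqrt_mul_transpose (hM : M.PosSemidef) : psqrt M * (psqrt M)ᵀ = M := by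
  have hsa : IsSelfAdjoint (psqrt M) := psqrt_eq_cfc hM ▸ cfc_predicate _ _
  rw [← conjTranspose_eq_transpose_of_trivial, ← star_eq_conjTranspose, hsa.star_eq,
    psqrt_eq_cfc hM, ← cfc_mul _ _ M]
  conv_rhs => rw [← cfc_id' ℝ M hM.1.isSelfAdjoint]
  refine cfc_congr fun x hx => Real.mul_self_sqrt ?_
  rw [hM.1.spectrum_real_eq_range_eigenvalues] at hx
  obtain ⟨i, rfl⟩ := hx
  exact hM.eigenvalues_nonneg i

open MatrixOrder in
lemma sub_lammin_smul_one_posSemidef (hM : M.IsHermitian) : (M - lammin M • 1).PosSemidef := by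
  rw [← le_iff, ← Algebra.algebraMap_eq_smul_one, algebraMap_le_iff_le_spectrum hM.isSelfAdjoint,
    hM.spectrum_real_eq_range_eigenvalues]
  rintro _ ⟨i, rfl⟩
  rw [lammin, dif_pos hM]
  exact ciInf_le (Finite.bddBelow_range _) i

lemma lammin_pos [NeZero r] (hM : M.PosDef) : 0 < lammin M := by
  rw [lammin, dif_pos hM.isHermitian]
  obtain ⟨i, hi⟩ := exists_eq_ciInf_of_finite (f := hM.isHermitian.eigenvalues)
  exact hi ▸ hM.eigenvalues_pos i

end Spectral

lemma posSemidef_transpose_mul_self {m n : Type*} [Fintype m] [Fintype n] (R : Matrix m n ℝ) :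
    (Rᵀ * R).PosSemidef := by
  simpa using posSemidef_conjTranspose_mul_self R

lemma fnorm_mul_psqrt_transpose_mul_self {m n r : ℕ} (D : Matrix (Fin m) (Fin r) ℝ)
    (R : Matrix (Fin n) (Fin r) ℝ) : fnorm (D * psqrt (Rᵀ * R)) = fnorm (D * Rᵀ) := by
  apply fnorm_mul_eq_of_mul_transpose_eq
  rw [psqrt_mul_transpose (posSemidef_transpose_mul_self R), transpose_transpose]

lemma lammin_mul_fnorm_sq_le {m n r : ℕ} (D : Matrix (Fin m) (Fin r) ℝ)
    (R : Matrix (Fin n) (Fin r) ℝ) : lammin (Rᵀ * R) * fnorm D ^ 2 ≤ fnorm (D * Rᵀ) ^ 2 := by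
  refine mul_fnorm_sq_le_fnorm_mul_sq ?_ D
  simpa using sub_lammin_smul_one_posSemidef (posSemidef_transpose_mul_self R).isHermitian

lemma mul_le_div_of_sq_mul_le {s x y a b : ℝ} (hs : 0 < s) (hx : s ^ 2 * x ^ 2 ≤ a ^ 2)
    (hy : s ^ 2 * y ^ 2 ≤ b ^ 2) : x * y ≤ (a ^ 2 + b ^ 2) / (2 * s ^ 2) := by
  rw [le_div_iff₀ (by positivity)]
  nlinarith [mul_nonneg (sq_nonneg s) (sq_nonneg (x - y))]

lemma fnorm_mul_fnorm_le_of_posDef {n1 n2 r : ℕ} {L : Matrix (Fin n1) (Fin r) ℝ}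
    {R : Matrix (Fin n2) (Fin r) ℝ} (hL : (Lᵀ * L).PosDef) (hR : (Rᵀ * R).PosDef)
    (D1 : Matrix (Fin n1) (Fin r) ℝ) (D2 : Matrix (Fin n2) (Fin r) ℝ) :
    fnorm D1 * fnorm D2 ≤ (fnorm (D1 * Rᵀ) ^ 2 + fnorm (L * D2ᵀ) ^ 2) /
      (2 * min (√(lammin (Lᵀ * L))) (√(lammin (Rᵀ * R))) ^ 2) := by
  obtain rfl | hr := r.eq_zero_or_pos
  -- For `r = 0` the infimum defining `lammin` is empty, so `σ_min = 0`; but then `D1` is empty too.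
  · have hD1 : fnorm D1 = 0 := by simp [Subsingleton.elim D1 0, fnorm, finner]
    rw [hD1, zero_mul]
    positivity
  have : NeZero r := ⟨hr.ne'⟩
  have hσ := lt_min (Real.sqrt_pos.2 (lammin_pos hL)) (Real.sqrt_pos.2 (lammin_pos hR))
  refine mul_le_div_of_sq_mul_le hσ ?_ ?_
  · refine le_trans ?_ (lammin_mul_fnorm_sq_le D1 R)
    gcongr
    exact (Real.le_sqrt' hσ).1 (min_le_right _ _)
  · rw [← fnorm_transpose (L * D2ᵀ), transpose_mul, transpose_transpose]
    refine le_trans ?_ (lammin_mul_fnorm_sq_le D2 L)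
    gcongr
    exact (Real.le_sqrt' hσ).1 (min_le_left _ _)

lemma add_le_sqrt_two_mul_sqrt_sq_add_sq (a b : ℝ) : a + b ≤ √2 * √(a ^ 2 + b ^ 2) := by
  rw [← Real.sqrt_mul zero_le_two]
  exact Real.le_sqrt_of_sq_le (by nlinarith [sq_nonneg (a - b)])

lemma half_fnorm_add_sq_le {m n : Type*} [Fintype m] [Fintype n] (E G H : Matrix m n ℝ) :
    1 / 2 * fnorm (E + (G + H)) ^ 2 ≤
      1 / 2 * fnorm E ^ 2 + finner E G + fnorm E * fnorm H + 1 / 2 * (fnorm G + fnorm H) ^ 2 := by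
  rw [fnorm_add_sq, finner_add_right]
  have hGH : fnorm (G + H) ^ 2 ≤ (fnorm G + fnorm H) ^ 2 := by
    gcongr
    · exact fnorm_nonneg _
    · exact fnorm_add_le G H
  linarith [finner_le_fnorm_mul_fnorm E H]

lemma second_order_remainder_le {p e : ℝ} (s : ℝ) (hp : 0 ≤ p) (he : 0 ≤ e) :
    e * (p ^ 2 / (2 * s ^ 2)) + 1 / 2 * (√2 * p + p ^ 2 / (2 * s ^ 2)) ^ 2 ≤
      (2 + p ^ 2 / (2 * s ^ 4) + √2 * e / s ^ 2 + 2 * p / s ^ 2) / 2 * p ^ 2 := by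
  set t := p ^ 2 / (2 * s ^ 2) with ht
  have hexpand : (2 + p ^ 2 / (2 * s ^ 4) + √2 * e / s ^ 2 + 2 * p / s ^ 2) / 2 * p ^ 2 =
      p ^ 2 + t ^ 2 + √2 * e * t + 2 * p * t := by
    obtain rfl | hs := eq_or_ne s 0
    · simp [ht]
    · rw [ht]; field_simp
  have h2 : √2 ^ 2 = 2 := Real.sq_sqrt zero_le_two
  have h1 : 1 ≤ √2 := Real.one_le_sqrt.2 one_le_two
  have ht0 : 0 ≤ t := by positivity
  rw [hexpand]
  nlinarith [mul_nonneg (mul_nonneg he ht0) (sub_nonneg.2 h1), mul_nonneg (mul_nonneg hp ht0)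
    (sub_nonneg.2 (show √2 ≤ 2 by nlinarith)), sq_nonneg t]

/-- matrix form of the paper's Lemma 2.
Descent-lemma-type expansion of the factorization loss along an update `(D1, D2)`
measured in the ScaledGD local norm `‖·‖_P`. -/
theorem stmt_1 {n1 n2 r : ℕ}
    (Xstar : Matrix (Fin n1) (Fin n2) ℝ)
    (L : Matrix (Fin n1) (Fin r) ℝ) (R : Matrix (Fin n2) (Fin r) ℝ)
    (hL : (Lᵀ * L).PosDef) (hR : (Rᵀ * R).PosDef)
    (D1 : Matrix (Fin n1) (Fin r) ℝ) (D2 : Matrix (Fin n2) (Fin r) ℝ)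
    (E : Matrix (Fin n1) (Fin n2) ℝ) (hE : E = L * Rᵀ - Xstar)
    (normP : ℝ)
    (hnormP : normP =
      Real.sqrt (fnorm (D1 * psqrt (Rᵀ * R)) ^ 2 + fnorm (D2 * psqrt (Lᵀ * L)) ^ 2))
    (σmin : ℝ)
    (hσmin : σmin = min (Real.sqrt (lammin (Lᵀ * L))) (Real.sqrt (lammin (Rᵀ * R))))
    (CP : ℝ)
    (hCP : CP = 2 + normP ^ 2 / (2 * σmin ^ 4) + Real.sqrt 2 * fnorm E / σmin ^ 2
      + 2 * normP / σmin ^ 2) :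
    1 / 2 * fnorm ((L + D1) * (R + D2)ᵀ - Xstar) ^ 2 ≤
      1 / 2 * fnorm E ^ 2 + finner E (D1 * Rᵀ + L * D2ᵀ) + CP / 2 * normP ^ 2 := by
  have hF : (L + D1) * (R + D2)ᵀ - Xstar = E + ((D1 * Rᵀ + L * D2ᵀ) + D1 * D2ᵀ) := by
    rw [hE, transpose_add, Matrix.add_mul, Matrix.mul_add, Matrix.mul_add]
    abel
  have hnormP' : normP = √(fnorm (D1 * Rᵀ) ^ 2 + fnorm (L * D2ᵀ) ^ 2) := by
    rw [hnormP, fnorm_mul_psqrt_transpose_mul_self, fnorm_mul_psqrt_transpose_mul_self,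
      ← fnorm_transpose (D2 * Lᵀ), transpose_mul, transpose_transpose]
  have hp : 0 ≤ normP := hnormP' ▸ Real.sqrt_nonneg _
  have hG : fnorm (D1 * Rᵀ + L * D2ᵀ) ≤ √2 * normP :=
    (fnorm_add_le _ _).trans (hnormP' ▸ add_le_sqrt_two_mul_sqrt_sq_add_sq _ _)
  have hH : fnorm (D1 * D2ᵀ) ≤ normP ^ 2 / (2 * σmin ^ 2) := by
    refine (fnorm_mul_le _ _).trans ?_
    rw [fnorm_transpose, hnormP', Real.sq_sqrt (by positivity), hσmin]
    exact fnorm_mul_fnorm_le_of_posDef hL hR D1 D2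
  rw [hF]
  calc _ ≤ 1 / 2 * fnorm E ^ 2 + finner E (D1 * Rᵀ + L * D2ᵀ) + fnorm E * fnorm (D1 * D2ᵀ)
        + 1 / 2 * (fnorm (D1 * Rᵀ + L * D2ᵀ) + fnorm (D1 * D2ᵀ)) ^ 2 :=
        half_fnorm_add_sq_le _ _ _
    _ ≤ 1 / 2 * fnorm E ^ 2 + finner E (D1 * Rᵀ + L * D2ᵀ)
        + fnorm E * (normP ^ 2 / (2 * σmin ^ 2))
        + 1 / 2 * (√2 * normP + normP ^ 2 / (2 * σmin ^ 2)) ^ 2 := by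
      gcongr
      · exact fnorm_nonneg _
      · exact add_nonneg (fnorm_nonneg _) (fnorm_nonneg _)
    _ ≤ _ := by
      rw [hCP]
      linarith [second_order_remainder_le σmin hp (fnorm_nonneg E)]
end

section
/- Let L ∈ ℝ^{n1×r} and R ∈ ℝ^{n2×r} satisfy LᵀL = RᵀR, and let L⋆ ∈ ℝ^{n1×r⋆} and R⋆ ∈ ℝ^{n2×r⋆} satisfy L⋆ᵀL⋆ = R⋆ᵀR⋆. Let F ∈ ℝ^{(n1+n2)×r} be the vertical block matrix with upper block L and lower block R, and let F⋆ ∈ ℝ^{(n1+n2)×r⋆} be the vertical block matrix with upper block L⋆ and lower block R⋆. Then ‖F Fᵀ − F⋆ F⋆ᵀ‖_F ≤ 2 ‖L Rᵀ − L⋆ R⋆ᵀ‖_F. -/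
open Matrix

lemma finner_self_nonneg {m n : Type*} [Fintype m] [Fintype n]
    (A : Matrix m n ℝ) : 0 ≤ finner A A := by
  unfold finner
  rw [Matrix.trace]
  apply Finset.sum_nonneg
  intro j _
  simp only [Matrix.diag_apply, Matrix.mul_apply, Matrix.transpose_apply]
  exact Finset.sum_nonneg fun i _ => mul_self_nonneg _

lemma trace_mul4 {a b c d : Type*} [Fintype a] [Fintype b] [Fintype c] [Fintype d]
    (A : Matrix a b ℝ) (B : Matrix b c ℝ) (C : Matrix c d ℝ) (D : Matrix d a ℝ) :
    (A * B * (C * D)).trace = ((B * C) * (D * A)).trace := by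
  rw [Matrix.mul_assoc, Matrix.trace_mul_comm]
  simp only [Matrix.mul_assoc]

/-- matrix form of the paper's appendix Lemma 10.
For balanced factor pairs, the Frobenius distance between the stacked Gram
matrices is at most twice the distance between the products. -/
theorem stmt_4 {n1 n2 r rstar : ℕ}
    (L : Matrix (Fin n1) (Fin r) ℝ) (R : Matrix (Fin n2) (Fin r) ℝ)
    (hbal : Lᵀ * L = Rᵀ * R)
    (Lstar : Matrix (Fin n1) (Fin rstar) ℝ) (Rstar : Matrix (Fin n2) (Fin rstar) ℝ)
    (hbalstar : Lstarᵀ * Lstar = Rstarᵀ * Rstar)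
    (F : Matrix (Fin n1 ⊕ Fin n2) (Fin r) ℝ) (hF : F = Matrix.fromRows L R)
    (Fstar : Matrix (Fin n1 ⊕ Fin n2) (Fin rstar) ℝ)
    (hFstar : Fstar = Matrix.fromRows Lstar Rstar) :
    fnorm (F * Fᵀ - Fstar * Fstarᵀ) ≤ 2 * fnorm (L * Rᵀ - Lstar * Rstarᵀ) := by
  set P : Matrix (Fin n1) (Fin n2) ℝ := L * Rᵀ - Lstar * Rstarᵀ with hP
  set Q : Matrix (Fin rstar) (Fin r) ℝ := Lstarᵀ * L - Rstarᵀ * R with hQ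
  -- scalar atoms
  have hFtF : Fᵀ * F = Lᵀ * L + Rᵀ * R := by
    subst hF; simp [Matrix.transpose_fromRows, Matrix.fromCols_mul_fromRows]
  have hFtFs : Fᵀ * Fstar = Lᵀ * Lstar + Rᵀ * Rstar := by
    subst hF hFstar; simp [Matrix.transpose_fromRows, Matrix.fromCols_mul_fromRows]
  have hFstF : Fstarᵀ * F = Lstarᵀ * L + Rstarᵀ * R := by
    subst hF hFstar; simp [Matrix.transpose_fromRows, Matrix.fromCols_mul_fromRows]
  have hFstFs : Fstarᵀ * Fstar = Lstarᵀ * Lstar + Rstarᵀ * Rstar := by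
    subst hFstar; simp [Matrix.transpose_fromRows, Matrix.fromCols_mul_fromRows]
  set g : ℝ := ((Lᵀ * L) * (Lᵀ * L)).trace with hg
  set gs : ℝ := ((Lstarᵀ * Lstar) * (Lstarᵀ * Lstar)).trace with hgs
  set m : ℝ := ((Lᵀ * Lstar) * (Lstarᵀ * L)).trace with hm
  set nn : ℝ := ((Rᵀ * Rstar) * (Rstarᵀ * R)).trace with hnn
  set c : ℝ := ((Lᵀ * Lstar) * (Rstarᵀ * R)).trace with hc
  have hmc : ((Lstarᵀ * L) * (Lᵀ * Lstar)).trace = m := by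
    rw [Matrix.trace_mul_comm]
  have hnnc : ((Rstarᵀ * R) * (Rᵀ * Rstar)).trace = nn := by
    rw [Matrix.trace_mul_comm]
  have hcross2 : ((Lstarᵀ * L) * (Rᵀ * Rstar)).trace = c := by
    rw [← Matrix.trace_transpose]
    simp only [Matrix.transpose_mul, Matrix.transpose_transpose]
    rw [Matrix.trace_mul_comm, hc]
  have hcross : ((Rᵀ * Rstar) * (Lstarᵀ * L)).trace = c := by
    rw [Matrix.trace_mul_comm, hcross2]
  have hcross3 : ((Rstarᵀ * R) * (Lᵀ * Lstar)).trace = c := by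
    rw [Matrix.trace_mul_comm, hc]
  -- finner of the big difference
  have hDD : finner (F * Fᵀ - Fstar * Fstarᵀ) (F * Fᵀ - Fstar * Fstarᵀ)
      = 4 * g + 4 * gs - 2 * (m + nn + 2 * c) := by
    unfold finner
    simp only [Matrix.transpose_sub, Matrix.transpose_mul, Matrix.transpose_transpose,
      Matrix.sub_mul, Matrix.mul_sub, Matrix.trace_sub]
    rw [trace_mul4 F Fᵀ F Fᵀ, trace_mul4 F Fᵀ Fstar Fstarᵀ,
      trace_mul4 Fstar Fstarᵀ F Fᵀ, trace_mul4 Fstar Fstarᵀ Fstar Fstarᵀ,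
      hFtF, hFtFs, hFstF, hFstFs, ← hbal, ← hbalstar]
    simp only [Matrix.add_mul, Matrix.mul_add, Matrix.trace_add]
    rw [hmc, hnnc, hcross2, hcross3, hcross]
    ring
  -- finner P P
  have hPP : finner P P = g + gs - 2 * c := by
    unfold finner
    rw [hP]
    simp only [Matrix.transpose_sub, Matrix.transpose_mul, Matrix.transpose_transpose,
      Matrix.sub_mul, Matrix.mul_sub, Matrix.trace_sub]
    rw [trace_mul4 R Lᵀ L Rᵀ, trace_mul4 R Lᵀ Lstar Rstarᵀ,
      trace_mul4 Rstar Lstarᵀ L Rᵀ, trace_mul4 Rstar Lstarᵀ Lstar Rstarᵀ,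
      ← hbal, ← hbalstar]
    rw [Matrix.trace_mul_comm (Lᵀ * L), hcross2]
    rw [Matrix.trace_mul_comm (Lstarᵀ * Lstar)]
    ring
  -- finner Q Q
  have hQQ : finner Q Q = m + nn - 2 * c := by
    unfold finner
    rw [hQ]
    simp only [Matrix.transpose_sub, Matrix.transpose_mul, Matrix.transpose_transpose,
      Matrix.sub_mul, Matrix.mul_sub, Matrix.trace_sub]
    simp only [← hm, ← hc, ← hnn, hcross]
    ring
  have hQnn : 0 ≤ finner Q Q := finner_self_nonneg Q
  have hle : finner (F * Fᵀ - Fstar * Fstarᵀ) (F * Fᵀ - Fstar * Fstarᵀ)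
      ≤ 4 * finner P P := by rw [hDD, hPP]; rw [hQQ] at hQnn; linarith
  unfold fnorm
  calc Real.sqrt (finner (F * Fᵀ - Fstar * Fstarᵀ) (F * Fᵀ - Fstar * Fstarᵀ))
      ≤ Real.sqrt (4 * finner P P) := Real.sqrt_le_sqrt hle
    _ = 2 * Real.sqrt (finner P P) := by
        rw [show (4:ℝ) = 2 ^ 2 by norm_num, Real.sqrt_mul (sq_nonneg 2),
          Real.sqrt_sq (by norm_num : (0:ℝ) ≤ 2)]
end

section
/- Let H be a real inner product space, let T : H → H be a self-adjoint linear map, and let 0 ≤ µ ≤ L with L > 0. Let Y, Z ∈ H and suppose that µ‖W‖² ≤ ⟨T W, W⟩ ≤ L‖W‖² for every W of the form W = aY + bZ with a, b ∈ ℝ. Then | (2/(µ+L)) ⟨T Y, Z⟩ − ⟨Y, Z⟩ | ≤ ((L−µ)/(L+µ)) ‖Y‖ ‖Z‖. -/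
open scoped RealInnerProductSpace

/-- abstract core of the paper's appendix Lemma 11.
For a self-adjoint map `T` whose quadratic form is sandwiched between `μ‖·‖²` and
`L‖·‖²` on the span of `Y` and `Z`, the bilinear form `(2/(μ+L))⟨T·,·⟩` is close to
the inner product. -/
theorem stmt_5 {H : Type*} [NormedAddCommGroup H] [InnerProductSpace ℝ H]
    (T : H →ₗ[ℝ] H) (hT : ∀ u v : H, ⟪T u, v⟫ = ⟪u, T v⟫)
    (μ L : ℝ) (hμ : 0 ≤ μ) (hμL : μ ≤ L) (hL : 0 < L)
    (Y Z : H)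
    (hbound : ∀ a b : ℝ,
      μ * ‖a • Y + b • Z‖ ^ 2 ≤ ⟪T (a • Y + b • Z), a • Y + b • Z⟫ ∧
      ⟪T (a • Y + b • Z), a • Y + b • Z⟫ ≤ L * ‖a • Y + b • Z‖ ^ 2) :
    |2 / (μ + L) * ⟪T Y, Z⟫ - ⟪Y, Z⟫| ≤ (L - μ) / (L + μ) * ‖Y‖ * ‖Z‖ := by
  have hsum : 0 < μ + L := by linarith
  rcases eq_or_ne Y 0 with hY | hY
  · subst hY; simp
  rcases eq_or_ne Z 0 with hZ | hZ
  · subst hZ; simp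
  have hy : 0 < ‖Y‖ := norm_pos_iff.mpr hY
  have hz : 0 < ‖Z‖ := norm_pos_iff.mpr hZ
  set K := 2 / (μ + L) with hKdef
  set c := (L - μ) / (L + μ) with hcdef
  -- key bound for any combination
  have key : ∀ a b : ℝ, |K * ⟪T (a • Y + b • Z), a • Y + b • Z⟫ - ‖a • Y + b • Z‖ ^ 2|
      ≤ c * ‖a • Y + b • Z‖ ^ 2 := by
    intro a b
    obtain ⟨h1, h2⟩ := hbound a b
    set q := ⟪T (a • Y + b • Z), a • Y + b • Z⟫ with hq
    set w := ‖a • Y + b • Z‖ ^ 2 with hw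
    have hw0 : (0:ℝ) ≤ w := sq_nonneg _
    rw [abs_le]
    constructor
    · have e : K * q - w + c * w = (2 * q - 2 * μ * w) / (μ + L) := by
        rw [hKdef, hcdef]; field_simp; ring
      have : (0:ℝ) ≤ (2 * q - 2 * μ * w) / (μ + L) :=
        div_nonneg (by linarith) hsum.le
      linarith [e ▸ this]
    · have e : K * q - w - c * w = (2 * q - 2 * L * w) / (μ + L) := by
        rw [hKdef, hcdef]; field_simp; ring
      have : (2 * q - 2 * L * w) / (μ + L) ≤ 0 :=
        div_nonpos_of_nonpos_of_nonneg (by linarith) hsum.le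
      linarith [e ▸ this]
  -- expansion identities
  have hTZY : ⟪T Z, Y⟫ = ⟪T Y, Z⟫ := by rw [hT, real_inner_comm]
  have hid1 : ∀ a b : ℝ, ⟪T (a • Y + b • Z), a • Y + b • Z⟫
      = a^2 * ⟪T Y, Y⟫ + 2*a*b*⟪T Y, Z⟫ + b^2 * ⟪T Z, Z⟫ := by
    intro a b
    simp only [map_add, map_smul, inner_add_left, inner_add_right,
      real_inner_smul_left, real_inner_smul_right, hTZY]
    ring
  have hid2 : ∀ a b : ℝ, ‖a • Y + b • Z‖ ^ 2
      = a^2 * ‖Y‖^2 + 2*a*b*⟪Y, Z⟫ + b^2 * ‖Z‖^2 := by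
    intro a b
    rw [← real_inner_self_eq_norm_sq, ← real_inner_self_eq_norm_sq,
      ← real_inner_self_eq_norm_sq]
    simp only [inner_add_left, inner_add_right, real_inner_smul_left,
      real_inner_smul_right, real_inner_comm Z Y]
    ring
  have h1 := key ‖Z‖ ‖Y‖
  have h2 := key ‖Z‖ (-‖Y‖)
  rw [hid1, hid2, abs_le] at h1 h2
  set P := ⟪T Y, Y⟫
  set Q := ⟪T Y, Z⟫
  set R := ⟪T Z, Z⟫
  set i := ⟪Y, Z⟫
  set y := ‖Y‖
  set z := ‖Z‖
  rw [abs_le]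
  have hc0 : 0 ≤ c := div_nonneg (by linarith) (by linarith)
  constructor
  · have h3 : y * z * (-(c * y * z)) ≤ y * z * (K * Q - i) := by nlinarith [h1.1, h1.2, h2.1, h2.2]
    have := le_of_mul_le_mul_left h3 (mul_pos hy hz)
    linarith
  · have h3 : y * z * (K * Q - i) ≤ y * z * (c * y * z) := by nlinarith [h1.1, h1.2, h2.1, h2.2]
    exact le_of_mul_le_mul_left h3 (mul_pos hy hz)
end
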